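/- Let H be a Hilbert space, V ⊆ H a closed subspace, and let u ∈ H with Galerkin error e := u − P_a u where P_a is the a-orthogonal projection onto V for a symmetric continuous coercive bilinear form a. Suppose a duality estimate holds: there is C > 0 such that for every f ∈ H there is w ∈ H with a(v, w) = ⟨f, v⟩ for all v ∈ H and an approximation w̃ ∈ V with ‖w − w̃‖_a ≤ C ε ‖f‖ for a parameter ε > 0. Then ‖e‖ ≤ C ε ‖e‖_a, where ‖·‖_a := a(·,·)^{1/2} and ‖·‖ is the H-norm. -/

import Mathlib

/-! Testing the dual problem with data `e` gives `‖e‖² = a(e, w)`, and Galerkin orthogonality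
lets us subtract the approximation: `‖e‖² = a(e, w - w̃)`. Cauchy–Schwarz for the energy form
bounds this by `‖e‖_a ‖w - w̃‖_a ≤ ‖e‖_a · Cε‖e‖`, and one factor `‖e‖` cancels. -/

open Real

namespace LinearMap.BilinForm

lemma apply_le_sqrt_mul_sqrt {M : Type*} [AddCommGroup M] [Module ℝ M]
    (B : LinearMap.BilinForm ℝ M) (hs : ∀ x, 0 ≤ B x x) (hB : LinearMap.IsSymm B) (x y : M) :
    B x y ≤ √(B x x) * √(B y y) := by
  rw [← sqrt_mul (hs x)]
  exact le_sqrt_of_sq_le (B.apply_sq_le_of_symm hs hB x y)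

end LinearMap.BilinForm

theorem norm_le_mul_sqrt_of_apply_eq_norm_sq {H : Type*} [NormedAddCommGroup H] [Module ℝ H]
    (a : LinearMap.BilinForm ℝ H) (hs : ∀ x, 0 ≤ a x x) (hsym : LinearMap.IsSymm a) {e w wt : H}
    (hw : a e w = ‖e‖ ^ 2) (hwt : a e wt = 0) {K : ℝ}
    (happrox : √(a (w - wt) (w - wt)) ≤ K * ‖e‖) :
    ‖e‖ ≤ K * √(a e e) := by
  rcases eq_or_ne e 0 with rfl | he
  · simp
  have hsq : ‖e‖ * ‖e‖ ≤ ‖e‖ * (K * √(a e e)) :=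
    calc ‖e‖ * ‖e‖ = a e (w - wt) := by rw [map_sub, hw, hwt, sub_zero, sq]
      _ ≤ √(a e e) * √(a (w - wt) (w - wt)) := a.apply_le_sqrt_mul_sqrt hs hsym e (w - wt)
      _ ≤ √(a e e) * (K * ‖e‖) := by gcongr
      _ = ‖e‖ * (K * √(a e e)) := by ring
  exact le_of_mul_le_mul_left hsq (norm_pos_iff.mpr he)

theorem stmt_14_general {H : Type*} [NormedAddCommGroup H] [InnerProductSpace ℝ H]
    (a : H →ₗ[ℝ] H →ₗ[ℝ] ℝ) (γ : ℝ) (hγ : 0 < γ)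
    (hcoer : ∀ v : H, a v v ≥ γ * ‖v‖ ^ 2)
    (hsym : ∀ u v : H, a u v = a v u)
    (V : Submodule ℝ H) (e : H)
    (horth : ∀ v ∈ V, a e v = 0)
    (C ε : ℝ)
    (hdual : ∀ f : H, ∃ w : H, (∀ v : H, a v w = inner ℝ f v) ∧
      ∃ wt ∈ V, Real.sqrt (a (w - wt) (w - wt)) ≤ C * ε * ‖f‖) :
    ‖e‖ ≤ C * ε * Real.sqrt (a e e) := by
  have hnonneg (v : H) : 0 ≤ a v v := (by positivity : 0 ≤ γ * ‖v‖ ^ 2).trans (hcoer v)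
  obtain ⟨w, hw, wt, hwt, happrox⟩ := hdual e
  refine norm_le_mul_sqrt_of_apply_eq_norm_sq a hnonneg ⟨fun u v => hsym u v⟩ ?_
    (horth wt hwt) happrox
  rw [hw e, real_inner_self_eq_norm_sq]

theorem stmt_14 {H : Type*} [NormedAddCommGroup H] [InnerProductSpace ℝ H]
    [CompleteSpace H] (a : H →ₗ[ℝ] H →ₗ[ℝ] ℝ) (Mc γ : ℝ) (hγ : 0 < γ)
    (hcont : ∀ u v : H, |a u v| ≤ Mc * ‖u‖ * ‖v‖)
    (hcoer : ∀ v : H, a v v ≥ γ * ‖v‖ ^ 2)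
    (hsym : ∀ u v : H, a u v = a v u)
    (V : Submodule ℝ H) (e : H)
    (horth : ∀ v ∈ V, a e v = 0)
    (C ε : ℝ) (hC : 0 < C) (hε : 0 < ε)
    (hdual : ∀ f : H, ∃ w : H, (∀ v : H, a v w = inner ℝ f v) ∧
      ∃ wt ∈ V, Real.sqrt (a (w - wt) (w - wt)) ≤ C * ε * ‖f‖) :
    ‖e‖ ≤ C * ε * Real.sqrt (a e e) :=
  stmt_14_general a γ hγ hcoer hsym V e horth C ε hdual
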